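/- (Gessel–Stanton open problem (6.5).) For every natural number n: ∑_{k=0}^{n} ((−n)_k (−n+1/4)_k)/((2n+5/4)_k · k!) · (1/9)^k = (5/4)_{2n}/((2/3)_n (13/12)_n) · (2^6/3^5)^n. -/
import Mathlib

noncomputable def poch (a : ℂ) (k : ℕ) : ℂ := ∏ j ∈ Finset.range k, (a + j)

lemma poch_zero (a : ℂ) : poch a 0 = 1 := by simp [poch]

lemma poch_succ (a : ℂ) (k : ℕ) : poch a (k+1) = poch a k * (a + k) := by
  simp [poch, Finset.prod_range_succ]

lemma poch_succ' (a : ℂ) (k : ℕ) : poch a (k+1) = a * poch (a+1) k := by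
  simp only [poch, Finset.prod_range_succ']
  push_cast
  rw [mul_comm]
  congr 1
  · ring
  · exact Finset.prod_congr rfl fun j _ => by ring

lemma poch_one (a : ℂ) : poch a 1 = a := by simp [poch]

lemma nz_real (x : ℝ) (hx : 0 < x) : (x : ℂ) ≠ 0 := by
  exact_mod_cast hx.ne'

lemma poch_cast_ne (x : ℝ) (hx : 0 < x) (k : ℕ) : poch (x : ℂ) k ≠ 0 := by
  refine Finset.prod_ne_zero_iff.mpr fun j _ => ?_
  have : ((x + j : ℝ) : ℂ) ≠ 0 := nz_real _ (by positivity)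
  push_cast at this
  exact this

lemma poch_neg_nat (n : ℕ) : poch (-(n:ℂ)) (n+1) = 0 := by
  apply Finset.prod_eq_zero (Finset.self_mem_range_succ n)
  simp

noncomputable def t (n k : ℕ) : ℂ :=
  poch (-(n : ℂ)) k * poch (-(n : ℂ) + 1 / 4) k /
    (poch (2 * (n : ℂ) + 5 / 4) k * (k.factorial : ℂ)) * (1 / 9 : ℂ) ^ k

noncomputable def Gc (n : ℕ) : ℕ → ℂ
  | 0 => 0
  | (m+1) =>
      ((288*(n:ℂ)^2+504*(n:ℂ)+405/2)*((m:ℂ)+1)^2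
        + (-144*(n:ℂ)^3-468*(n:ℂ)^2-(1917/4)*(n:ℂ)-1215/8)*((m:ℂ)+1)
        + (-468*(n:ℂ)^4-1494*(n:ℂ)^3-(27909/16)*(n:ℂ)^2-(56583/64)*(n:ℂ)-5265/32)) *
      poch (-(n:ℂ)) m * poch (-(n:ℂ)+1/4) m /
      (poch (2*(n:ℂ)+5/4) (m+2) * (m.factorial : ℂ)) * (1/9 : ℂ)^(m+1)

lemma step (n k : ℕ) :
    243*((n:ℂ)+2/3)*((n:ℂ)+13/12) * t (n+1) k
      - 64*(2*(n:ℂ)+5/4)*(2*(n:ℂ)+9/4) * t n k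
    = Gc n (k+1) - Gc n k := by
  obtain _ | m := k
  · -- k = 0
    have h1 : 2*(n:ℂ)+5/4 ≠ 0 := by
      have := nz_real (2*(n:ℝ)+5/4) (by positivity); push_cast at this; exact this
    have h2 : 2*(n:ℂ)+9/4 ≠ 0 := by
      have := nz_real (2*(n:ℝ)+9/4) (by positivity); push_cast at this; exact this
    have hp2 : poch (2*(n:ℂ)+5/4) 2 = (2*(n:ℂ)+5/4) * (2*(n:ℂ)+9/4) := by
      have h := poch_succ (2*(n:ℂ)+5/4) 1
      rw [poch_one] at h
      rw [h]; push_cast; ring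
    simp only [t, Gc, poch_zero, Nat.factorial_zero, pow_zero, pow_one, Nat.cast_zero,
      Nat.cast_one, hp2, sub_zero]
    conv_rhs => rw [div_mul_eq_mul_div]
    rw [eq_div_iff (show (2*(n:ℂ)+5/4)*(2*(n:ℂ)+9/4)*1 ≠ 0 from mul_ne_zero (mul_ne_zero h1 h2) one_ne_zero)]
    push_cast
    ring
  · -- k = m+1
    have h1 : 2*(n:ℂ)+5/4 ≠ 0 := by
      have := nz_real (2*(n:ℝ)+5/4) (by positivity); push_cast at this; exact this
    have h2 : 2*(n:ℂ)+9/4 ≠ 0 := by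
      have := nz_real (2*(n:ℝ)+9/4) (by positivity); push_cast at this; exact this
    have h3 : 2*(n:ℂ)+5/4+(m:ℂ) ≠ 0 := by
      have := nz_real (2*(n:ℝ)+5/4+(m:ℝ)) (by positivity); push_cast at this; exact this
    have h4 : 2*(n:ℂ)+9/4+(m:ℂ) ≠ 0 := by
      have := nz_real (2*(n:ℝ)+9/4+(m:ℝ)) (by positivity); push_cast at this; exact this
    have h5 : 2*(n:ℂ)+13/4+(m:ℂ) ≠ 0 := by
      have := nz_real (2*(n:ℝ)+13/4+(m:ℝ)) (by positivity); push_cast at this; exact this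
    have hm : (m:ℂ)+1 ≠ 0 := by
      have := nz_real ((m:ℝ)+1) (by positivity); push_cast at this; exact this
    have hS : poch (2*(n:ℂ)+5/4) m ≠ 0 := by
      have e : (2*(n:ℂ)+5/4) = ((2*(n:ℝ)+5/4 : ℝ) : ℂ) := by push_cast; ring
      rw [e]; exact poch_cast_ne _ (by positivity) m
    have hT : poch (2*((n:ℂ)+1)+5/4) (m+1) ≠ 0 := by
      have e : (2*((n:ℂ)+1)+5/4) = ((2*((n:ℝ)+1)+5/4 : ℝ) : ℂ) := by push_cast; ring
      rw [e]; exact poch_cast_ne _ (by positivity) (m+1)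
    have hf : (m.factorial : ℂ) ≠ 0 := by
      exact_mod_cast m.factorial_ne_zero
    -- pochhammer relations
    have eL : poch (2*(n:ℂ)+5/4) (m+3)
        = poch (2*(n:ℂ)+5/4) m * (2*(n:ℂ)+5/4+(m:ℂ)) * (2*(n:ℂ)+9/4+(m:ℂ)) * (2*(n:ℂ)+13/4+(m:ℂ)) := by
      rw [show m+3 = m+1+1+1 from rfl, poch_succ, poch_succ, poch_succ]
      push_cast; ring
    have eR : poch (2*(n:ℂ)+5/4) (m+3)
        = (2*(n:ℂ)+5/4) * ((2*(n:ℂ)+9/4) * poch (2*((n:ℂ)+1)+5/4) (m+1)) := by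
      rw [show m+3 = (m+1)+1+1 from rfl, poch_succ']
      rw [show (2*(n:ℂ)+5/4+1 : ℂ) = 2*(n:ℂ)+9/4 by ring, poch_succ']
      rw [show (2*(n:ℂ)+9/4+1 : ℂ) = 2*((n:ℂ)+1)+5/4 by ring]
    have hrel : poch (2*(n:ℂ)+5/4) m * (2*(n:ℂ)+5/4+(m:ℂ)) * (2*(n:ℂ)+9/4+(m:ℂ)) * (2*(n:ℂ)+13/4+(m:ℂ))
        = poch (2*((n:ℂ)+1)+5/4) (m+1) * ((2*(n:ℂ)+5/4)*(2*(n:ℂ)+9/4)) := by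
      rw [← eL, eR]; ring
    have hfac : (((m+1).factorial : ℕ) : ℂ) = (m.factorial : ℂ) * ((m:ℂ)+1) := by
      rw [Nat.factorial_succ]; push_cast; ring
    have hpm1 : poch (-(n:ℂ)) (m+1) = poch (-(n:ℂ)) m * (-(n:ℂ)+(m:ℂ)) := poch_succ _ m
    have hpm2 : poch (-(n:ℂ)+1/4) (m+1) = poch (-(n:ℂ)+1/4) m * (-(n:ℂ)+1/4+(m:ℂ)) := poch_succ _ m
    have hpm3 : poch (2*(n:ℂ)+5/4) (m+1) = poch (2*(n:ℂ)+5/4) m * (2*(n:ℂ)+5/4+(m:ℂ)) := poch_succ _ m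
    have hpm4 : poch (2*(n:ℂ)+5/4) (m+2)
        = poch (2*(n:ℂ)+5/4) m * (2*(n:ℂ)+5/4+(m:ℂ)) * (2*(n:ℂ)+9/4+(m:ℂ)) := by
      rw [show m+2 = m+1+1 from rfl, poch_succ, poch_succ]; push_cast; ring
    have hq1 : poch (-((n:ℂ)+1)) (m+1) = (-(n:ℂ)-1) * poch (-(n:ℂ)) m := by
      rw [show (-((n:ℂ)+1)) = (-(n:ℂ)-1) by ring, poch_succ',
        show (-(n:ℂ)-1+1) = -(n:ℂ) by ring]
    have hq2 : poch (-((n:ℂ)+1)+1/4) (m+1) = (-(n:ℂ)-3/4) * poch (-(n:ℂ)+1/4) m := by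
      rw [show (-((n:ℂ)+1)+1/4) = (-(n:ℂ)-3/4) by ring, poch_succ',
        show (-(n:ℂ)-3/4+1) = -(n:ℂ)+1/4 by ring]
    set D : ℂ := poch (2*(n:ℂ)+5/4) m * (2*(n:ℂ)+5/4+(m:ℂ)) * (2*(n:ℂ)+9/4+(m:ℂ)) * (2*(n:ℂ)+13/4+(m:ℂ))
        * ((m.factorial : ℂ) * ((m:ℂ)+1) * 729) with hD_def
    have hD : D ≠ 0 := by
      rw [hD_def]
      refine mul_ne_zero (mul_ne_zero (mul_ne_zero (mul_ne_zero hS h3) h4) h5) ?_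
      exact mul_ne_zero (mul_ne_zero hf hm) (by norm_num)
    have hD' : poch (2*(n:ℂ)+5/4) m * (2*(n:ℂ)+5/4+(m:ℂ)) * (2*(n:ℂ)+9/4+(m:ℂ)) * (2*(n:ℂ)+13/4+(m:ℂ))
        * ((m.factorial : ℂ) * ((m:ℂ)+1) * 729) ≠ 0 := by
      rw [← hD_def]; exact hD
    have E1 : 243*((n:ℂ)+2/3)*((n:ℂ)+13/12) * t (n+1) (m+1)
        = (243*((n:ℂ)+2/3)*((n:ℂ)+13/12) * ((-(n:ℂ)-1) * poch (-(n:ℂ)) m)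
            * ((-(n:ℂ)-3/4) * poch (-(n:ℂ)+1/4) m) * ((2*(n:ℂ)+5/4)*(2*(n:ℂ)+9/4)) * 81
            * (1/9:ℂ)^m) / D := by
      simp only [t]
      rw [show (((n+1:ℕ)):ℂ) = (n:ℂ)+1 by push_cast; ring]
      rw [hq1, hq2, hfac, pow_succ, hD_def]
      rw [show poch (2*(n:ℂ)+5/4) m * (2*(n:ℂ)+5/4+(m:ℂ)) * (2*(n:ℂ)+9/4+(m:ℂ)) * (2*(n:ℂ)+13/4+(m:ℂ))
        * ((m.factorial : ℂ) * ((m:ℂ)+1) * 729)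
        = poch (2*((n:ℂ)+1)+5/4) (m+1) * ((2*(n:ℂ)+5/4)*(2*(n:ℂ)+9/4))
          * ((m.factorial : ℂ) * ((m:ℂ)+1) * 729) from by rw [← hrel]]
      rw [div_mul_eq_mul_div, ← mul_div_assoc,
        div_eq_div_iff (mul_ne_zero hT (mul_ne_zero hf hm))
          (mul_ne_zero (mul_ne_zero hT (mul_ne_zero h1 h2))
            (mul_ne_zero (mul_ne_zero hf hm) (by norm_num)))]
      ring
    have E2 : 64*(2*(n:ℂ)+5/4)*(2*(n:ℂ)+9/4) * t n (m+1)
        = (64*(2*(n:ℂ)+5/4)*(2*(n:ℂ)+9/4) * (poch (-(n:ℂ)) m * (-(n:ℂ)+(m:ℂ)))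
            * (poch (-(n:ℂ)+1/4) m * (-(n:ℂ)+1/4+(m:ℂ)))
            * ((2*(n:ℂ)+9/4+(m:ℂ))*(2*(n:ℂ)+13/4+(m:ℂ))) * 81 * (1/9:ℂ)^m) / D := by
      simp only [t]
      rw [hpm1, hpm2, hpm3, hfac, pow_succ, hD_def]
      rw [div_mul_eq_mul_div, ← mul_div_assoc,
        div_eq_div_iff (mul_ne_zero (mul_ne_zero hS h3) (mul_ne_zero hf hm)) hD']
      ring
    have E3 : Gc n (m+1+1)
        = (((288*(n:ℂ)^2+504*(n:ℂ)+405/2)*((m:ℂ)+2)^2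
            + (-144*(n:ℂ)^3-468*(n:ℂ)^2-(1917/4)*(n:ℂ)-1215/8)*((m:ℂ)+2)
            + (-468*(n:ℂ)^4-1494*(n:ℂ)^3-(27909/16)*(n:ℂ)^2-(56583/64)*(n:ℂ)-5265/32))
            * (poch (-(n:ℂ)) m * (-(n:ℂ)+(m:ℂ))) * (poch (-(n:ℂ)+1/4) m * (-(n:ℂ)+1/4+(m:ℂ)))
            * 9 * (1/9:ℂ)^m) / D := by
      simp only [Gc]
      rw [show (((m+1:ℕ)):ℂ) = (m:ℂ)+1 by push_cast; ring]
      rw [hpm1, hpm2, show m+1+2 = m+3 from rfl, eL, hfac, pow_succ, pow_succ, hD_def]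
      rw [div_mul_eq_mul_div,
        div_eq_div_iff (mul_ne_zero (mul_ne_zero (mul_ne_zero (mul_ne_zero hS h3) h4) h5)
          (mul_ne_zero hf hm)) hD']
      ring
    have E4 : Gc n (m+1)
        = (((288*(n:ℂ)^2+504*(n:ℂ)+405/2)*((m:ℂ)+1)^2
            + (-144*(n:ℂ)^3-468*(n:ℂ)^2-(1917/4)*(n:ℂ)-1215/8)*((m:ℂ)+1)
            + (-468*(n:ℂ)^4-1494*(n:ℂ)^3-(27909/16)*(n:ℂ)^2-(56583/64)*(n:ℂ)-5265/32))
            * poch (-(n:ℂ)) m * poch (-(n:ℂ)+1/4) m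
            * ((2*(n:ℂ)+13/4+(m:ℂ)) * ((m:ℂ)+1)) * 81 * (1/9:ℂ)^m) / D := by
      simp only [Gc]
      rw [hpm4, pow_succ, hD_def]
      rw [div_mul_eq_mul_div,
        div_eq_div_iff (mul_ne_zero (mul_ne_zero (mul_ne_zero hS h3) h4) hf) hD']
      ring
    rw [E1, E2, E3, E4, div_sub_div_same, div_sub_div_same]
    congr 1
    ring

lemma t_top (n : ℕ) : t n (n+1) = 0 := by
  simp [t, poch_neg_nat]

lemma Gc_zero (n : ℕ) : Gc n 0 = 0 := rfl

lemma Gc_top (n : ℕ) : Gc n (n+1+1) = 0 := by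
  simp [Gc, poch_neg_nat]

lemma recc (n : ℕ) :
    243*((n:ℂ)+2/3)*((n:ℂ)+13/12) * (∑ k ∈ Finset.range (n+1+1), t (n+1) k)
      = 64*(2*(n:ℂ)+5/4)*(2*(n:ℂ)+9/4) * (∑ k ∈ Finset.range (n+1), t n k) := by
  have hsum : ∑ k ∈ Finset.range (n+2),
      (243*((n:ℂ)+2/3)*((n:ℂ)+13/12) * t (n+1) k
        - 64*(2*(n:ℂ)+5/4)*(2*(n:ℂ)+9/4) * t n k) = 0 := by
    rw [Finset.sum_congr rfl (fun k _ => step n k), Finset.sum_range_sub (fun k => Gc n k) (n+2)]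
    rw [Gc_zero, show n+2 = n+1+1 from rfl, Gc_top, sub_zero]
  rw [Finset.sum_sub_distrib, sub_eq_zero] at hsum
  rw [Finset.mul_sum, Finset.mul_sum]
  rw [show n+1+1 = n+2 from rfl, hsum]
  rw [show (∑ k ∈ Finset.range (n+2), 64*(2*(n:ℂ)+5/4)*(2*(n:ℂ)+9/4) * t n k)
    = ∑ k ∈ Finset.range (n+1+1), 64*(2*(n:ℂ)+5/4)*(2*(n:ℂ)+9/4) * t n k from rfl]
  rw [Finset.sum_range_succ, t_top, mul_zero, add_zero]

noncomputable def Rc (n : ℕ) : ℂ :=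
  poch (5 / 4) (2 * n) / (poch (2 / 3) n * poch (13 / 12) n) * ((2 ^ 6 / 3 ^ 5 : ℂ)) ^ n

lemma Rrec (n : ℕ) :
    243*((n:ℂ)+2/3)*((n:ℂ)+13/12) * Rc (n+1)
      = 64*(2*(n:ℂ)+5/4)*(2*(n:ℂ)+9/4) * Rc n := by
  have e1 : poch (5/4:ℂ) (2*(n+1)) = poch (5/4:ℂ) (2*n) * ((5/4:ℂ)+2*(n:ℂ)) * ((9/4:ℂ)+2*(n:ℂ)) := by
    rw [show 2*(n+1) = 2*n+1+1 from by ring, poch_succ, poch_succ]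
    push_cast; ring
  have e2 : poch (2/3:ℂ) (n+1) = poch (2/3:ℂ) n * ((2/3:ℂ)+(n:ℂ)) := poch_succ _ n
  have e3 : poch (13/12:ℂ) (n+1) = poch (13/12:ℂ) n * ((13/12:ℂ)+(n:ℂ)) := poch_succ _ n
  have hA : poch (2/3:ℂ) n ≠ 0 := by
    have e : (2/3:ℂ) = ((2/3:ℝ):ℂ) := by norm_num
    rw [e]; exact poch_cast_ne _ (by norm_num) n
  have hB : poch (13/12:ℂ) n ≠ 0 := by
    have e : (13/12:ℂ) = ((13/12:ℝ):ℂ) := by norm_num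
    rw [e]; exact poch_cast_ne _ (by norm_num) n
  have hc : (2/3:ℂ)+(n:ℂ) ≠ 0 := by
    have := nz_real (2/3+(n:ℝ)) (by positivity); push_cast at this; exact this
  have hd : (13/12:ℂ)+(n:ℂ) ≠ 0 := by
    have := nz_real (13/12+(n:ℝ)) (by positivity); push_cast at this; exact this
  unfold Rc
  rw [e1, e2, e3, pow_succ]
  rw [div_mul_eq_mul_div, div_mul_eq_mul_div, ← mul_div_assoc]
  conv_rhs => rw [← mul_div_assoc]
  rw [div_eq_div_iff (mul_ne_zero (mul_ne_zero hA hc) (mul_ne_zero hB hd)) (mul_ne_zero hA hB)]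
  ring

/-- Gessel–Stanton open problem (6.5). -/
theorem gessel_stanton_6_5 (n : ℕ) :
    ∑ k ∈ Finset.range (n + 1),
        poch (-(n : ℂ)) k * poch (-(n : ℂ) + 1 / 4) k /
          (poch (2 * (n : ℂ) + 5 / 4) k * (k.factorial : ℂ)) *
          (1 / 9 : ℂ) ^ k
      = poch (5 / 4) (2 * n) / (poch (2 / 3) n * poch (13 / 12) n) *
          ((2 ^ 6 / 3 ^ 5 : ℂ)) ^ n := by
  induction n with
  | zero =>
    norm_num [Finset.sum_range_one, poch_zero]
  | succ n ih =>
    have ih' : (∑ k ∈ Finset.range (n+1), t n k) = Rc n := ih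
    have hc1 : 243*((n:ℂ)+2/3)*((n:ℂ)+13/12) ≠ 0 := by
      have p1 : (n:ℂ)+2/3 ≠ 0 := by
        have := nz_real ((n:ℝ)+2/3) (by positivity); push_cast at this; exact this
      have p2 : (n:ℂ)+13/12 ≠ 0 := by
        have := nz_real ((n:ℝ)+13/12) (by positivity); push_cast at this; exact this
      exact mul_ne_zero (mul_ne_zero (by norm_num) p1) p2
    have main : (∑ k ∈ Finset.range (n+1+1), t (n+1) k) = Rc (n+1) := by
      apply mul_left_cancel₀ hc1
      rw [recc n, ih', Rrec n]
    exact main
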